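/- arXiv:1208.5248 — 5 statements merged into one kernel-verified Lean document; each statement's English description precedes it below -/
import Mathlib

section
/- Let m, r be positive integers with r < m, and let V ⊆ R^m be a linear subspace with dim V ≤ m − 2. Then for Lebesgue-almost every (x_1,…,x_{r+m}) ∈ [0,1]^{r+m}, setting W = span{(x_1,…,x_m), (x_{r+1},…,x_{r+m})} ⊆ R^m, one has dim(V + W) = dim V + 2. -/
/-!
Write `u x` and `v x` for the two windows of `x`. For linear forms `f`, `g` vanishing on `V`, the
quadratic polynomial `f (u x) * g (v x) - g (u x) * f (v x)` is nonzero only where `u x`, `v x`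
are independent modulo `V`; and a nonzero polynomial vanishes only on a null set (Fubini, by
induction on the number of variables). So it suffices to find a single `x₀` with `u x₀`, `v x₀`
independent modulo `V`, and to choose `f`, `g` adapted to it.

Such an `x₀` exists because `u x = u k + T (v x)`, where `k` lies in the kernel of `v` and `T` is
the nilpotent shift by `r`. If every `x` were bad, intersecting `V + ⟨w₁⟩` and `V + ⟨w₂⟩` for two
vectors independent modulo `V` (codimension `≥ 2`) would give `u (ker v) ⊆ V`, then `T V ⊆ V`,
and nilpotency would force `T w ∈ V` for all `w`; hence `V` would contain the range of `u`, which
is everything.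
-/

open MeasureTheory Module Submodule

theorem MvPolynomial.volume_setOf_eval_eq_zero {n : ℕ} {p : MvPolynomial (Fin n) ℝ}
    (hp : p ≠ 0) : volume {x : Fin n → ℝ | eval x p = 0} = 0 := by
  induction n with
  | zero =>
    suffices {x : Fin 0 → ℝ | eval x p = 0} = ∅ by simp [this]
    refine Set.eq_empty_of_forall_notMem fun x hx => hp (MvPolynomial.funext fun y => ?_)
    rw [Subsingleton.elim y x, hx, map_zero]
  | succ n ih =>
    set q := finSuccEquiv ℝ n p
    have hq : q ≠ 0 := (map_ne_zero_iff _ (finSuccEquiv ℝ n).injective).2 hp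
    have hslice : ∀ s : Fin n → ℝ, eval s q.leadingCoeff ≠ 0 →
        volume {t : ℝ | eval (Fin.cons t s : Fin (n + 1) → ℝ) p = 0} = 0 := by
      intro s hs
      have hmap : q.map (eval s) ≠ 0 := fun h => hs <| by
        rw [Polynomial.leadingCoeff, ← Polynomial.coeff_map, h, Polynomial.coeff_zero]
      simp_rw [eval_eq_eval_mv_eval']
      exact (Polynomial.finite_setOfPred_isRoot hmap).measure_zero _
    have hmeas : MeasurableSet {x : Fin (n + 1) → ℝ | eval x p = 0} :=
      (isClosed_eq (continuous_eval p) continuous_const).measurableSet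
    have e := (volume_preserving_piFinSuccAbove (fun _ : Fin (n + 1) => ℝ) 0).symm
    rw [← e.measure_preimage hmeas.nullMeasurableSet, Measure.volume_eq_prod,
      Measure.prod_apply_symm (e.measurable hmeas)]
    refine lintegral_eq_zero_of_ae_eq_zero ?_
    refine measure_mono_null (fun s hs => ?_) (ih (Polynomial.leadingCoeff_ne_zero.2 hq))
    by_contra h
    refine hs ?_
    simpa [MeasurableEquiv.piFinSuccAbove, Fin.insertNthEquiv, Fin.insertNth_zero'] using hslice s h

theorem MvPolynomial.exists_eval_eq_linearMap {R ι : Type*} [CommRing R] [Fintype ι]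
    (L : (ι → R) →ₗ[R] R) : ∃ p : MvPolynomial ι R, ∀ x, eval x p = L x := by
  classical
  exact ⟨∑ i, C (L fun j => if i = j then 1 else 0) * X i, fun x => by
    simp [LinearMap.pi_apply_eq_sum_univ L x, mul_comm]⟩

theorem ae_mul_sub_mul_ne_zero {n : ℕ} (L₁ L₂ L₃ L₄ : (Fin n → ℝ) →ₗ[ℝ] ℝ) {x₀ : Fin n → ℝ}
    (h : L₁ x₀ * L₂ x₀ - L₃ x₀ * L₄ x₀ ≠ 0) : ∀ᵐ x, L₁ x * L₂ x - L₃ x * L₄ x ≠ 0 := by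
  obtain ⟨p₁, hp₁⟩ := MvPolynomial.exists_eval_eq_linearMap L₁
  obtain ⟨p₂, hp₂⟩ := MvPolynomial.exists_eval_eq_linearMap L₂
  obtain ⟨p₃, hp₃⟩ := MvPolynomial.exists_eval_eq_linearMap L₃
  obtain ⟨p₄, hp₄⟩ := MvPolynomial.exists_eval_eq_linearMap L₄
  have heval : ∀ x, MvPolynomial.eval x (p₁ * p₂ - p₃ * p₄) = L₁ x * L₂ x - L₃ x * L₄ x := by
    simp [hp₁, hp₂, hp₃, hp₄]
  have hp : p₁ * p₂ - p₃ * p₄ ≠ 0 := fun h0 => h (by rw [← heval, h0, map_zero])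
  simpa [ae_iff, heval] using MvPolynomial.volume_setOf_eval_eq_zero hp

section LinearAlgebra

variable {K E X : Type*} [Field K] [AddCommGroup E] [Module K E] [AddCommGroup X] [Module K X]
  {V : Submodule K E}

theorem exists_notMem_sup_span_of_finrank_add_two_le [FiniteDimensional K E]
    (h : finrank K V + 2 ≤ finrank K E) : ∃ v₁ v₂ : E, v₁ ∉ V ∧ v₂ ∉ V ⊔ span K {v₁} := by
  have exists_notMem : ∀ W : Submodule K E, finrank K W < finrank K E → ∃ v, v ∉ W := by
    intro W hW
    by_contra! hall
    rw [(eq_top_iff' (p := W)).2 hall, finrank_top] at hW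
    exact hW.false
  obtain ⟨v₁, hv₁⟩ := exists_notMem V (by omega)
  obtain ⟨v₂, hv₂⟩ :=
    exists_notMem (V ⊔ span K {v₁}) (by rw [finrank_sup_span_singleton hv₁]; omega)
  exact ⟨v₁, v₂, hv₁, hv₂⟩

theorem finrank_sup_span_pair [FiniteDimensional K E] {u v : E} (hv : v ∉ V)
    (hu : u ∉ V ⊔ span K {v}) :
    finrank K (V ⊔ span K {u, v} : Submodule K E) = finrank K V + 2 := by
  rw [span_insert, sup_comm (span K {u}), ← sup_assoc, finrank_sup_span_singleton hu,
    finrank_sup_span_singleton hv]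

theorem exists_mem_sub_smul_of_mem_sup_span {w z : E} (h : z ∈ V ⊔ span K {w}) :
    ∃ c : K, z - c • w ∈ V := by
  obtain ⟨p, hp, q, hq, rfl⟩ := mem_sup.1 h
  obtain ⟨c, rfl⟩ := mem_span_singleton.1 hq
  exact ⟨c, by simpa using hp⟩

theorem mem_of_forall_notMem_mem_sup_span {v₁ v₂ z : E} (hv₁ : v₁ ∉ V)
    (hv₂ : v₂ ∉ V ⊔ span K {v₁}) (h : ∀ w ∉ V, z ∈ V ⊔ span K {w}) : z ∈ V := by
  obtain ⟨c, hc⟩ := exists_mem_sub_smul_of_mem_sup_span (h v₂ fun h => hv₂ (mem_sup_left h))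
  rcases eq_or_ne c 0 with rfl | hc0
  · simpa using hc
  refine absurd ((smul_mem_iff _ hc0).1 ?_) hv₂
  simpa using sub_mem (h v₁ hv₁) (mem_sup_left hc)

theorem mem_of_apply_mem_sup_span_self {T : E →ₗ[K] E} (hT : IsNilpotent T)
    (hTV : ∀ p ∈ V, T p ∈ V) {w : E} (hw : T w ∈ V ⊔ span K {w}) : T w ∈ V := by
  obtain ⟨c, hc⟩ := exists_mem_sub_smul_of_mem_sup_span hw
  rcases eq_or_ne c 0 with rfl | hc0
  · simpa using hc
  suffices w ∈ V from hTV w this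
  have hpow : ∀ k : ℕ, (T ^ k) w - c ^ k • w ∈ V := by
    intro k
    induction k with
    | zero => simp
    | succ k ih =>
      have : (T ^ (k + 1)) w - c ^ (k + 1) • w =
          T ((T ^ k) w - c ^ k • w) + c ^ k • (T w - c • w) := by
        rw [pow_succ', Module.End.mul_apply, map_sub, map_smul, smul_sub, smul_smul, pow_succ]
        abel
      rw [this]
      exact add_mem (hTV _ ih) (smul_mem _ _ hc)
  obtain ⟨n, hn⟩ := hT
  have := hpow n
  rw [hn, LinearMap.zero_apply, zero_sub, neg_mem_iff] at this
  exact (smul_mem_iff _ (pow_ne_zero n hc0)).1 this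

theorem exists_apply_notMem_sup_span {u v : X →ₗ[K] E} (s : E →ₗ[K] X) (hvs : v ∘ₗ s = .id)
    (hus : IsNilpotent (u ∘ₗ s)) (hu : Function.Surjective u) {v₁ v₂ : E} (hv₁ : v₁ ∉ V)
    (hv₂ : v₂ ∉ V ⊔ span K {v₁}) : ∃ x, v x ∉ V ∧ u x ∉ V ⊔ span K {v x} := by
  by_contra! hbad
  set T := u ∘ₗ s
  have hvs' : ∀ w, v (s w) = w := fun w => LinearMap.congr_fun hvs w
  -- `x = k + s w` with `v k = 0` has `v x = w` and `u x = u k + T w`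
  have hsplit : ∀ k, v k = 0 → ∀ w ∉ V, u k + T w ∈ V ⊔ span K {w} := by
    intro k hk w hw
    simpa [T, hk, hvs'] using hbad (k + s w) (by simpa [hk, hvs'] using hw)
  have hT : ∀ w ∉ V, T w ∈ V ⊔ span K {w} := fun w hw => by
    simpa using hsplit 0 (map_zero v) w hw
  have hker : ∀ k, v k = 0 → u k ∈ V := fun k hk =>
    mem_of_forall_notMem_mem_sup_span hv₁ hv₂ fun w hw => by
      simpa using sub_mem (hsplit k hk w hw) (hT w hw)
  have hTV : ∀ p ∈ V, T p ∈ V := by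
    intro p hp
    refine mem_of_forall_notMem_mem_sup_span hv₁ hv₂ fun w hw => ?_
    have hpw : p + w ∉ V := fun h => hw (by simpa using sub_mem h hp)
    have hle : V ⊔ span K {p + w} ≤ V ⊔ span K {w} := sup_le le_sup_left <|
      (span_singleton_le_iff_mem _ _).2 <|
        add_mem (mem_sup_left hp) (mem_sup_right (mem_span_singleton_self w))
    simpa using sub_mem (hle (hT (p + w) hpw)) (hT w hw)
  have hTall : ∀ w, T w ∈ V := by
    intro w
    by_cases hw : w ∈ V
    · exact hTV w hw
    · exact mem_of_apply_mem_sup_span_self hus hTV (hT w hw)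
  refine hv₁ ?_
  obtain ⟨x, rfl⟩ := hu v₁
  have : u x = u (x - s (v x)) + T (v x) := by simp [T]
  rw [this]
  exact add_mem (hker _ (by simp [hvs'])) (hTall _)

theorem exists_le_ker_mul_sub_mul_ne_zero {u v : E} (hv : v ∉ V) (hu : u ∉ V ⊔ span K {v}) :
    ∃ f g : E →ₗ[K] K, V ≤ LinearMap.ker f ∧ V ≤ LinearMap.ker g ∧ f u * g v - g u * f v ≠ 0 := by
  obtain ⟨f, hfu, hf⟩ := exists_dual_map_eq_bot_of_notMem hu inferInstance
  obtain ⟨g, hgv, hg⟩ := exists_dual_map_eq_bot_of_notMem hv inferInstance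
  rw [← LinearMap.le_ker_iff_map] at hf hg
  have hfv : f v = 0 := hf (mem_sup_right (mem_span_singleton_self v))
  exact ⟨f, g, le_sup_left.trans hf, hg, by simpa [hfv] using And.intro hfu hgv⟩

theorem finrank_sup_span_pair_of_mul_sub_mul_ne_zero [FiniteDimensional K E] {f g : E →ₗ[K] K}
    (hf : V ≤ LinearMap.ker f) (hg : V ≤ LinearMap.ker g) {u v : E}
    (h : f u * g v - g u * f v ≠ 0) :
    finrank K (V ⊔ span K {u, v} : Submodule K E) = finrank K V + 2 := by
  refine finrank_sup_span_pair (fun hv => h ?_) (fun hu => h ?_)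
  · rw [LinearMap.mem_ker.1 (hf hv), LinearMap.mem_ker.1 (hg hv)]
    ring
  · obtain ⟨c, hc⟩ := exists_mem_sub_smul_of_mem_sup_span hu
    have hfu : f u = c * f v := by simpa [sub_eq_zero] using hf hc
    have hgu : g u = c * g v := by simpa [sub_eq_zero] using hg hc
    rw [hfu, hgu]
    ring

end LinearAlgebra

section Windows

variable (R : Type*) [CommSemiring R] (r m : ℕ)

def headWindow : (Fin (r + m) → R) →ₗ[R] Fin m → R :=
  LinearMap.funLeft R R (Fin.castLE (Nat.le_add_left m r))

def tailWindow : (Fin (r + m) → R) →ₗ[R] Fin m → R :=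
  LinearMap.funLeft R R (Fin.natAdd r)

def padLeft : (Fin m → R) →ₗ[R] Fin (r + m) → R where
  toFun w := Fin.append 0 w
  map_add' w w' := by
    funext i
    refine Fin.addCases (fun i => ?_) (fun i => ?_) i <;> simp
  map_smul' c w := by
    funext i
    refine Fin.addCases (fun i => ?_) (fun i => ?_) i <;> simp

theorem tailWindow_comp_padLeft : tailWindow R r m ∘ₗ padLeft R r m = .id := by
  ext w i
  simp [tailWindow, padLeft, LinearMap.funLeft]

theorem headWindow_surjective : Function.Surjective (headWindow R r m) :=
  LinearMap.funLeft_surjective_of_injective _ _ _ (Fin.castLE_injective _)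

theorem headWindow_padLeft_apply (w : Fin m → R) (j : Fin m) :
    headWindow R r m (padLeft R r m w) j =
      if h : (j : ℕ) < r then 0 else w ⟨j - r, by omega⟩ := by
  simp only [headWindow, padLeft, LinearMap.funLeft_apply, LinearMap.coe_mk, AddHom.coe_mk]
  split_ifs with h
  · rw [show Fin.castLE _ j = Fin.castAdd m ⟨j, h⟩ from rfl, Fin.append_left, Pi.zero_apply]
  · rw [show Fin.castLE _ j = Fin.natAdd r ⟨j - r, by omega⟩ from Fin.ext (by simp; omega),
      Fin.append_right]

theorem isNilpotent_headWindow_comp_padLeft (hr : 0 < r) :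
    IsNilpotent (headWindow R r m ∘ₗ padLeft R r m) := by
  refine ⟨m, ?_⟩
  have hvanish : ∀ k (w : Fin m → R) (j : Fin m), (j : ℕ) < k * r →
      ((headWindow R r m ∘ₗ padLeft R r m) ^ k) w j = 0 := by
    intro k
    induction k with
    | zero => intro w j hj; omega
    | succ k ih =>
      intro w j hj
      rw [pow_succ', Module.End.mul_apply, LinearMap.comp_apply, headWindow_padLeft_apply]
      split_ifs with h
      · rfl
      · exact ih w _ (show (j : ℕ) - r < k * r by rw [Nat.succ_mul] at hj; omega)
  exact LinearMap.ext fun w => funext fun j => hvanish m w j (by have := j.isLt; nlinarith)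

end Windows

theorem stmt_4 (m r : ℕ) (hr : 0 < r) (hrm : r < m)
    (V : Submodule ℝ (Fin m → ℝ)) (hV : Module.finrank ℝ V ≤ m - 2) :
    ∀ᵐ x : Fin (r + m) → ℝ ∂volume,
      (∀ i, x i ∈ Set.Icc (0 : ℝ) 1) →
        Module.finrank ℝ
          (V ⊔ Submodule.span ℝ
            {(fun j : Fin m => x (Fin.castLE (Nat.le_add_left m r) j)),
             (fun j : Fin m => x ⟨r + j, by omega⟩)} : Submodule ℝ (Fin m → ℝ))
          = Module.finrank ℝ V + 2 := by
  obtain ⟨v₁, v₂, hv₁, hv₂⟩ :=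
    exists_notMem_sup_span_of_finrank_add_two_le (V := V) (by rw [finrank_fin_fun]; omega)
  obtain ⟨x₀, hvx₀, hux₀⟩ := exists_apply_notMem_sup_span (padLeft ℝ r m)
    (tailWindow_comp_padLeft ℝ r m) (isNilpotent_headWindow_comp_padLeft ℝ r m hr)
    (headWindow_surjective ℝ r m) hv₁ hv₂
  obtain ⟨f, g, hf, hg, hfg⟩ := exists_le_ker_mul_sub_mul_ne_zero hvx₀ hux₀
  filter_upwards [ae_mul_sub_mul_ne_zero (f ∘ₗ headWindow ℝ r m) (g ∘ₗ tailWindow ℝ r m)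
    (g ∘ₗ headWindow ℝ r m) (f ∘ₗ tailWindow ℝ r m) hfg] with x hx _
  exact finrank_sup_span_pair_of_mul_sub_mul_ne_zero hf hg hx
end

section
/- Let (X,T) be a topological dynamical system (X compact metric, T a homeomorphism) and let n be a positive integer. Then (X,T) has a closed n-marker if and only if it has an open n-marker. -/
/-!
Closed to open: a closed marker `F` is compact and disjoint from the compact set `T^[i] '' F`,
so they have disjoint open neighbourhoods `A` and `B`; then `A ∩ T^[i] ⁻¹' B` is an open
neighbourhood of `F` disjoint from its own `T^[i]`-image. Intersecting these neighbourhoods over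
`1 ≤ i ≤ n - 1` gives an open marker: enlarging a marker keeps the covering property.

Open to closed: the open sets `T^[i] '' U`, `1 ≤ i ≤ m`, cover `X`, so by the shrinking lemma
there are closed `v i ⊆ T^[i] '' U` still covering `X`. The closed set `⋃ i, T^[i] ⁻¹' v i` lies
in `U`, hence keeps the disjointness property, and its images still cover `X`.
-/

/-- `F` is an `n`-marker for the homeomorphism `T`. -/
def IsNMarker {X : Type*} [TopologicalSpace X] (T : X ≃ₜ X) (n : ℕ) (F : Set X) : Prop :=
  (∀ i : ℕ, 1 ≤ i → i ≤ n - 1 → F ∩ (⇑T)^[i] '' F = ∅) ∧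
  ∃ m : ℕ, ∀ x : X, ∃ i : ℕ, 1 ≤ i ∧ i ≤ m ∧ x ∈ (⇑T)^[i] '' F

open Set

theorem IsOpenMap.iterate {X : Type*} [TopologicalSpace X] {f : X → X} (hf : IsOpenMap f)
    (n : ℕ) : IsOpenMap f^[n] :=
  Nat.recOn n IsOpenMap.id fun _ ihn => ihn.comp hf

theorem IsCompact.exists_isOpen_superset_disjoint_image {X : Type*} [TopologicalSpace X]
    [T2Space X] {f : X → X} (hf : Continuous f) {K : Set X} (hK : IsCompact K)
    (hKf : Disjoint K (f '' K)) : ∃ V, IsOpen V ∧ K ⊆ V ∧ Disjoint V (f '' V) := by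
  obtain ⟨A, B, hA, hB, hKA, hfKB, hAB⟩ :=
    SeparatedNhds.of_isCompact_isCompact hK (hK.image hf) hKf
  refine ⟨A ∩ f ⁻¹' B, hA.inter (hB.preimage hf),
    fun x hx => ⟨hKA hx, hfKB (mem_image_of_mem f hx)⟩, ?_⟩
  exact hAB.mono inter_subset_left
    ((image_mono inter_subset_right).trans (image_preimage_subset f B))

namespace IsNMarker

variable {X : Type*} [TopologicalSpace X] {T : X ≃ₜ X} {n : ℕ} {F G : Set X}

theorem of_subset (hF : IsNMarker T n F) (hFG : F ⊆ G)
    (hG : ∀ i : ℕ, 1 ≤ i → i ≤ n - 1 → G ∩ (⇑T)^[i] '' G = ∅) : IsNMarker T n G :=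
  ⟨hG, hF.2.imp fun _ hcov x =>
    (hcov x).imp fun _ ⟨h1, hm, hx⟩ => ⟨h1, hm, image_mono hFG hx⟩⟩

theorem of_superset (hG : IsNMarker T n G) (hFG : F ⊆ G)
    (hF : ∃ m : ℕ, ∀ x : X, ∃ i : ℕ, 1 ≤ i ∧ i ≤ m ∧ x ∈ (⇑T)^[i] '' F) : IsNMarker T n F :=
  ⟨fun i h1 h2 => subset_empty_iff.1 <|
    (hG.1 i h1 h2).subst (inter_subset_inter hFG (image_mono hFG)), hF⟩

theorem exists_isOpen [CompactSpace X] [T2Space X] (hF : IsNMarker T n F) (hFc : IsClosed F) :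
    ∃ U : Set X, IsOpen U ∧ IsNMarker T n U := by
  have hV : ∀ i ∈ Finset.Icc 1 (n - 1),
      ∃ V : Set X, IsOpen V ∧ F ⊆ V ∧ Disjoint V ((⇑T)^[i] '' V) := fun i hi =>
    hFc.isCompact.exists_isOpen_superset_disjoint_image (T.continuous.iterate i) <|
      disjoint_iff_inter_eq_empty.2 (hF.1 i (Finset.mem_Icc.1 hi).1 (Finset.mem_Icc.1 hi).2)
  choose! V hVo hFV hVdisj using hV
  refine ⟨⋂ i ∈ Finset.Icc 1 (n - 1), V i, isOpen_biInter_finset hVo,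
    hF.of_subset (subset_iInter₂ hFV) fun i h1 h2 => ?_⟩
  have hi : i ∈ Finset.Icc 1 (n - 1) := Finset.mem_Icc.2 ⟨h1, h2⟩
  have hsub := biInter_subset_of_mem (t := V) hi
  exact disjoint_iff_inter_eq_empty.1 ((hVdisj i hi).mono hsub (image_mono hsub))

theorem exists_isClosed [NormalSpace X] {U : Set X} (hU : IsNMarker T n U) (hUo : IsOpen U) :
    ∃ F : Set X, IsClosed F ∧ IsNMarker T n F := by
  obtain ⟨m, hcov⟩ := hU.2
  let u : Icc 1 m → Set X := fun i => (⇑T)^[i] '' U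
  have hu : ⋃ i, u i = univ := eq_univ_of_forall fun x => by
    obtain ⟨i, h1, hm, hx⟩ := hcov x
    exact mem_iUnion.2 ⟨⟨i, h1, hm⟩, hx⟩
  obtain ⟨v, hv, hvc, hvu⟩ := exists_iUnion_eq_closed_subset
    (fun i : Icc 1 m => T.isOpenMap.iterate i U hUo) (fun _ => toFinite _) hu
  refine ⟨⋃ i : Icc 1 m, (⇑T)^[i] ⁻¹' v i,
    isClosed_iUnion_of_finite fun i => (hvc i).preimage (T.continuous.iterate i),
    hU.of_superset ?_ ⟨m, fun x => ?_⟩⟩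
  · refine iUnion_subset fun i x hx => ?_
    exact (T.injective.iterate i).mem_set_image.1 (hvu i hx)
  · obtain ⟨i, hx⟩ := mem_iUnion.1 (hv.ge (mem_univ x))
    refine ⟨i, i.2.1, i.2.2, ?_⟩
    rw [← (T.surjective.iterate i).image_preimage (v i)] at hx
    exact image_mono (subset_iUnion (fun j : Icc 1 m => (⇑T)^[j] ⁻¹' v j) i) hx

end IsNMarker

theorem stmt_5_general {X : Type*} [MetricSpace X] [CompactSpace X] (T : X ≃ₜ X)
    (n : ℕ) :
    (∃ F : Set X, IsClosed F ∧ IsNMarker T n F) ↔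
      (∃ U : Set X, IsOpen U ∧ IsNMarker T n U) :=
  ⟨fun ⟨_, hFc, hF⟩ => hF.exists_isOpen hFc, fun ⟨_, hUo, hU⟩ => hU.exists_isClosed hUo⟩

theorem stmt_5 {X : Type*} [MetricSpace X] [CompactSpace X] (T : X ≃ₜ X)
    (n : ℕ) (hn : 0 < n) :
    (∃ F : Set X, IsClosed F ∧ IsNMarker T n F) ↔
      (∃ U : Set X, IsOpen U ∧ IsNMarker T n U) :=
  stmt_5_general T n
end

section
/- Let X be a compact metric space, T : X → X a homeomorphism, and K ⊆ (X×X)∖Δ a compact set, where Δ is the diagonal. Then the set D_K = {f ∈ C(X,[0,1]^d) : for every (x,y) ∈ K there exists n ∈ Z with f(T^n x) ≠ f(T^n y)} is open in C(X,[0,1]^d) with the supremum metric. -/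
theorem Homeomorph.toEquiv_zpow {X : Type*} [TopologicalSpace X] (T : X ≃ₜ X) (n : ℤ) :
    (T ^ n).toEquiv = T.toEquiv ^ n :=
  map_zpow (MonoidHom.mk' Homeomorph.toEquiv fun _ _ => rfl) T n

theorem IsCompact.isOpen_setOf_forall_prodMk_mem {α β : Type*} [TopologicalSpace α]
    [TopologicalSpace β] {K : Set β} (hK : IsCompact K) {U : Set (α × β)} (hU : IsOpen U) :
    IsOpen {a | ∀ b ∈ K, (a, b) ∈ U} :=
  isOpen_iff_eventually.2 fun _ ha =>
    hK.eventually_forall_of_forall_eventually fun b hb => hU.mem_nhds (ha b hb)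

theorem ContinuousMap.isOpen_setOf_forall_mem_exists_apply_ne {X Y ι : Type*}
    [TopologicalSpace X] [TopologicalSpace Y] [LocallyCompactPair X Y] [T2Space Y]
    {φ : ι → X → X} (hφ : ∀ i, Continuous (φ i)) {K : Set (X × X)} (hK : IsCompact K) :
    IsOpen {f : C(X, Y) | ∀ p ∈ K, ∃ i, f (φ i p.1) ≠ f (φ i p.2)} := by
  have hsep : IsOpen {q : C(X, Y) × (X × X) | ∃ i, q.1 (φ i q.2.1) ≠ q.1 (φ i q.2.2)} := by
    simp only [Set.ofPred_exists]
    exact isOpen_iUnion fun i => isOpen_ne_fun (by fun_prop) (by fun_prop)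
  exact hK.isOpen_setOf_forall_prodMk_mem hsep

theorem stmt_6_general {X : Type*} [MetricSpace X] [CompactSpace X] (d : ℕ) (T : X ≃ₜ X)
    (K : Set (X × X)) (hK : IsCompact K) :
    IsOpen {f : C(X, Fin d → Set.Icc (0 : ℝ) 1) |
      ∀ p ∈ K, ∃ n : ℤ, f ((T.toEquiv ^ n) p.1) ≠ f ((T.toEquiv ^ n) p.2)} :=
  -- for compact `X` the sup-metric topology on `C(X, _)` is the compact-open one, definitionally
  ContinuousMap.isOpen_setOf_forall_mem_exists_apply_ne
    (fun n => by rw [← Homeomorph.toEquiv_zpow]; exact (T ^ n).continuous) hK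

theorem stmt_6 {X : Type*} [MetricSpace X] [CompactSpace X] (d : ℕ) (T : X ≃ₜ X)
    (K : Set (X × X)) (hK : IsCompact K)
    (hKdiag : K ⊆ {p : X × X | p.1 ≠ p.2}) :
    IsOpen {f : C(X, Fin d → Set.Icc (0 : ℝ) 1) |
      ∀ p ∈ K, ∃ n : ℤ, f ((T.toEquiv ^ n) p.1) ≠ f ((T.toEquiv ^ n) p.2)} :=
  stmt_6_general d T K hK
end

section
/- Let n : X → R be any function on a set X with a map T : X → X, let M be an even positive integer, and suppose there is at most one index j with −(3/2)M ≤ j ≤ M/2 − 2 such that n(T^{j+1}x) ≠ n(T^j x) + 1. Then there exists an integer r with −(3/2)M ≤ r ≤ 0 such that ⌊n(T^r x)⌋ mod M ≤ M/2 and for all s with r ≤ s ≤ r + M/2 − 1: ⌈n(T^s x)⌉ mod M = (⌈n(T^r x)⌉ mod M) + s − r and ⌊n(T^s x)⌋ mod M = (⌊n(T^r x)⌋ mod M) + s − r. -/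
/-!
Writing `M = 2m`, the at most one break in the steps `-3m ≤ j ≤ m - 2` misses one of the two
disjoint windows of `2m - 1` steps starting at `-3m` and at `-m`. On such a window the sequence
`n(T^j x)` increases by exactly one per step, so along it `⌊·⌋` and `⌈·⌉` increase by one per step
as well. Within its first `m + 1` positions one finds an `r` where `⌊·⌋ mod 2m < m`; from there
the next `m` values of `⌊·⌋` and `⌈·⌉` (the latter being at most `⌊·⌋ + 1`) do not wrap
around modulo `2m`.
-/

theorem Int.add_emod_of_emod_add_lt {n a d : ℤ} (h0 : 0 ≤ a % n + d) (h1 : a % n + d < n) :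
    (a + d) % n = a % n + d := by
  rw [← Int.emod_eq_of_lt h0 h1]
  exact Int.ModEq.add_right d (Int.mod_modEq a n).symm

theorem Int.exists_add_emod_two_mul_lt (e : ℤ) {m : ℤ} (hm : 0 < m) :
    ∃ t, 0 ≤ t ∧ t ≤ m ∧ (e + t) % (2 * m) < m := by
  have hlt := Int.emod_lt_of_pos e (by omega : 0 < 2 * m)
  by_cases he : e % (2 * m) < m
  · exact ⟨0, le_rfl, hm.le, by simpa using he⟩
  · -- `e + t` is the next multiple of `2m` above `e`
    refine ⟨2 * m - e % (2 * m), by omega, by omega, ?_⟩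
    have hmul : e + (2 * m - e % (2 * m)) = 2 * m * (e / (2 * m) + 1) := by
      linear_combination (-1 : ℤ) * Int.mul_ediv_add_emod e (2 * m)
    rw [hmul, Int.mul_emod_right]
    exact hm

theorem eq_add_sub_of_forall_eq_add_one {R : Type*} [AddCommGroupWithOne R] {a : ℤ → R} {c L : ℤ}
    (hrun : ∀ i, c ≤ i → i < c + L → a (i + 1) = a i + 1) :
    ∀ j, c ≤ j → j ≤ c + L → a j = a c + (j - c : ℤ) := by
  intro j hcj
  induction j, hcj using Int.leInduction with
  | base => simp
  | succ j hcj ih =>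
    intro hj
    rw [hrun j hcj (by omega), ih (by omega)]
    push_cast
    abel

theorem exists_forall_eq_add_one_of_subsingleton_ne {R : Type*} [Add R] [One R] {a : ℤ → R}
    {c L : ℤ}
    (huniq : ∀ j k, (c ≤ j ∧ j < c + 2 * L + 1 ∧ a (j + 1) ≠ a j + 1) →
      (c ≤ k ∧ k < c + 2 * L + 1 ∧ a (k + 1) ≠ a k + 1) → j = k) :
    ∃ c', (c' = c ∨ c' = c + L + 1) ∧ ∀ i, c' ≤ i → i < c' + L → a (i + 1) = a i + 1 := by
  by_cases hbreak : ∃ j, c ≤ j ∧ j < c + L ∧ a (j + 1) ≠ a j + 1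
  · obtain ⟨j, hcj, hjL, hj⟩ := hbreak
    refine ⟨c + L + 1, Or.inr rfl, fun i hi hiL => ?_⟩
    by_contra hne
    have := huniq i j ⟨by omega, by omega, hne⟩ ⟨hcj, by omega, hj⟩
    omega
  · push Not at hbreak
    exact ⟨c, Or.inl rfl, hbreak⟩

section FloorRing

variable {R : Type*} [Ring R] [LinearOrder R] [FloorRing R] [IsOrderedRing R]

theorem ceil_floor_emod_add_intCast {n k : ℤ} (u : R) (hk : 0 ≤ k) (hlt : ⌊u⌋ % n + k + 1 < n) :
    ⌈u + k⌉ % n = ⌈u⌉ % n + k ∧ ⌊u + k⌋ % n = ⌊u⌋ % n + k := by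
  rcases eq_or_ne n 0 with rfl | hn
  · simp only [Int.emod_zero, Int.ceil_add_intCast, Int.floor_add_intCast, and_self]
  have h0 := Int.emod_nonneg ⌊u⌋ hn
  have hfc := Int.floor_le_ceil u
  have hcf := Int.ceil_le_floor_add_one u
  have hceil : ⌈u⌉ % n = ⌊u⌋ % n + (⌈u⌉ - ⌊u⌋) := by
    rw [← Int.add_emod_of_emod_add_lt (by omega) (by omega), add_sub_cancel]
  have hceil' : ⌈u + k⌉ % n = ⌊u⌋ % n + (⌈u⌉ - ⌊u⌋ + k) := by
    rw [Int.ceil_add_intCast, ← Int.add_emod_of_emod_add_lt (by omega) (by omega)]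
    congr 1
    ring
  rw [Int.floor_add_intCast, Int.add_emod_of_emod_add_lt (by omega) (by omega), hceil', hceil]
  exact ⟨by ring, rfl⟩

theorem exists_ceil_floor_emod_eq_add_sub {a : ℤ → R} {c m : ℤ} (hm : 0 < m)
    (hrun : ∀ i, c ≤ i → i < c + (2 * m - 1) → a (i + 1) = a i + 1) :
    ∃ r, c ≤ r ∧ r ≤ c + m ∧ ⌊a r⌋ % (2 * m) < m ∧
      ∀ s, r ≤ s → s ≤ r + m - 1 →
        ⌈a s⌉ % (2 * m) = ⌈a r⌉ % (2 * m) + s - r ∧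
        ⌊a s⌋ % (2 * m) = ⌊a r⌋ % (2 * m) + s - r := by
  have hlin := eq_add_sub_of_forall_eq_add_one hrun
  obtain ⟨t, ht0, htm, ht⟩ := Int.exists_add_emod_two_mul_lt ⌊a c⌋ hm
  have hr : a (c + t) = a c + t := by
    rw [hlin (c + t) (by omega) (by omega), add_sub_cancel_left]
  have hfloor : ⌊a (c + t)⌋ % (2 * m) < m := by rwa [hr, Int.floor_add_intCast]
  refine ⟨c + t, by omega, by omega, hfloor, fun s hs1 hs2 => ?_⟩
  have hs : a s = a (c + t) + (s - (c + t) : ℤ) := by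
    rw [hlin s (by omega) (by omega), hr]
    push_cast
    abel
  rw [hs, add_sub_assoc, add_sub_assoc]
  exact ceil_floor_emod_add_intCast _ (by omega) (by omega)

end FloorRing

theorem stmt_7 {X : Type*} (T : Equiv.Perm X) (g : X → ℝ) (x : X)
    (M : ℕ) (hM : 0 < M) (hMeven : Even M)
    (huniq : ∀ j k : ℤ,
      (-(3 * (M : ℤ)) / 2 ≤ j ∧ j ≤ (M : ℤ) / 2 - 2 ∧ g ((T ^ (j + 1)) x) ≠ g ((T ^ j) x) + 1) →
      (-(3 * (M : ℤ)) / 2 ≤ k ∧ k ≤ (M : ℤ) / 2 - 2 ∧ g ((T ^ (k + 1)) x) ≠ g ((T ^ k) x) + 1) →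
      j = k) :
    ∃ r : ℤ, -(3 * (M : ℤ)) / 2 ≤ r ∧ r ≤ 0 ∧
      ⌊g ((T ^ r) x)⌋ % (M : ℤ) ≤ (M : ℤ) / 2 ∧
      ∀ s : ℤ, r ≤ s → s ≤ r + (M : ℤ) / 2 - 1 →
        ⌈g ((T ^ s) x)⌉ % (M : ℤ) = ⌈g ((T ^ r) x)⌉ % (M : ℤ) + s - r ∧
        ⌊g ((T ^ s) x)⌋ % (M : ℤ) = ⌊g ((T ^ r) x)⌋ % (M : ℤ) + s - r := by
  obtain ⟨m, rfl⟩ := hMeven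
  have hM2 : ((m + m : ℕ) : ℤ) = 2 * m := by push_cast; ring
  obtain ⟨c, hc, hrun⟩ := exists_forall_eq_add_one_of_subsingleton_ne
    (a := fun j : ℤ => g ((T ^ j) x)) (c := -(3 * m)) (L := 2 * m - 1)
    fun j k hj hk => huniq j k ⟨by omega, by omega, hj.2.2⟩ ⟨by omega, by omega, hk.2.2⟩
  obtain ⟨r, hcr, hrc, hfloor, hstep⟩ :=
    exists_ceil_floor_emod_eq_add_sub (a := fun j : ℤ => g ((T ^ j) x)) (m := m) (by omega) hrun
  refine ⟨r, by omega, by omega, by rw [hM2]; omega, fun s hs1 hs2 => ?_⟩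
  rw [hM2]
  exact hstep s hs1 (by omega)
end

section
/- Let (X,T) and (Y,S) be topological dynamical systems and φ : (Y,S) → (X,T) a factor map (continuous equivariant surjection). If (X,T) has the marker property, then (Y,S) has the marker property. -/
/-- The marker property for a homeomorphism `T` of a space `X`. -/
def MarkerProperty {X : Type*} [TopologicalSpace X] (T : X ≃ₜ X) : Prop :=
  ∀ n : ℕ, 0 < n → ∃ U : Set X, IsOpen U ∧
    (∀ i : ℕ, 1 ≤ i → i ≤ n - 1 → U ∩ (⇑T)^[i] '' U = ∅) ∧
    ∃ m : ℕ, ∀ x : X, ∃ i : ℕ, 1 ≤ i ∧ i ≤ m ∧ x ∈ (⇑T)^[i] '' U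

theorem Function.Semiconj.image_preimage {α β : Type*} {f : α → β} {ga : α → α} {gb : β → β}
    (h : Function.Semiconj f ga gb) (hga : Function.Surjective ga) (hgb : Function.Injective gb)
    (s : Set β) : ga '' (f ⁻¹' s) = f ⁻¹' (gb '' s) := by
  ext y
  constructor
  · rintro ⟨z, hz, rfl⟩
    exact ⟨f z, hz, (h z).symm⟩
  · rintro ⟨x, hx, hxy⟩
    obtain ⟨z, rfl⟩ := hga y
    refine ⟨z, ?_, rfl⟩
    rwa [Set.mem_preimage, ← hgb (hxy.trans (h z))]

theorem Function.Semiconj.iterate_image_preimage {α β : Type*} {f : α → β} {ga : α → α}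
    {gb : β → β} (h : Function.Semiconj f ga gb) (hga : Function.Surjective ga)
    (hgb : Function.Injective gb) (n : ℕ) (s : Set β) :
    ga^[n] '' (f ⁻¹' s) = f ⁻¹' (gb^[n] '' s) :=
  (h.iterate_right n).image_preimage (hga.iterate n) (hgb.iterate n) s

theorem stmt_11_general {X Y : Type*} [MetricSpace X]
    [MetricSpace Y] (T : X ≃ₜ X) (S : Y ≃ₜ Y)
    (φ : Y → X) (hφcont : Continuous φ)
    (hφequiv : ∀ y, φ (S y) = T (φ y))
    (hX : MarkerProperty T) : MarkerProperty S := by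
  have himage (i : ℕ) (U : Set X) : (⇑S)^[i] '' (φ ⁻¹' U) = φ ⁻¹' ((⇑T)^[i] '' U) :=
    Function.Semiconj.iterate_image_preimage hφequiv S.surjective T.injective i U
  intro n hn
  obtain ⟨U, hUopen, hUdisj, m, hUcov⟩ := hX n hn
  refine ⟨φ ⁻¹' U, hUopen.preimage hφcont, fun i h1 h2 => ?_, m, fun y => ?_⟩
  · rw [himage, ← Set.preimage_inter, hUdisj i h1 h2, Set.preimage_empty]
  · simpa only [himage, Set.mem_preimage] using hUcov (φ y)

theorem stmt_11 {X Y : Type*} [MetricSpace X] [CompactSpace X]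
    [MetricSpace Y] [CompactSpace Y] (T : X ≃ₜ X) (S : Y ≃ₜ Y)
    (φ : Y → X) (hφcont : Continuous φ) (hφsurj : Function.Surjective φ)
    (hφequiv : ∀ y, φ (S y) = T (φ y))
    (hX : MarkerProperty T) : MarkerProperty S :=
  stmt_11_general T S φ hφcont hφequiv hX
end
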